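/- arXiv:2202.04993 — 2 statements merged into one kernel-verified Lean document; each statement's English description precedes it below -/
import Mathlib

section
/- For a finite simple graph G on n vertices, F(G) = n − 1 if and only if G has an isolated vertex. -/
open SimpleGraph

variable {V : Type*}

/-- One step of the standard zero forcing color-change rule: a blue vertex `u`
whose unique white neighbor is `v` forces `v` to become blue. -/
def zfStep (G : SimpleGraph V) (B : Set V) : Set V :=
  B ∪ {v | v ∉ B ∧ ∃ u ∈ B, G.Adj u v ∧ ∀ w, G.Adj u w → w ∉ B → w = v}

/-- `S` is a zero forcing set: iterating the standard color-change rule from `S`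
eventually colors every vertex blue. -/
def IsZeroForcingSet (G : SimpleGraph V) (S : Set V) : Prop :=
  (⋃ n, (zfStep G)^[n] S) = Set.univ

/-- The failed zero forcing number `F(G)`: the maximum cardinality of a set that
is not a zero forcing set. -/
noncomputable def failedZF (G : SimpleGraph V) : ℕ :=
  sSup {n | ∃ S : Set V, ¬ IsZeroForcingSet G S ∧ S.ncard = n}

/-- The zero forcing number `Z(G)`. -/
noncomputable def zfNumber (G : SimpleGraph V) : ℕ :=
  sInf {n | ∃ S : Set V, IsZeroForcingSet G S ∧ S.ncard = n}

/-- One step of the positive semidefinite color-change rule. -/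
def psdStep (G : SimpleGraph V) (B : Set V) : Set V :=
  B ∪ {v | ∃ (hv : v ∉ B), ∃ u ∈ B, G.Adj u v ∧
        ∀ (w : V) (hw : w ∉ B), G.Adj u w →
          (G.induce {x | x ∉ B}).Reachable ⟨w, hw⟩ ⟨v, hv⟩ → w = v}

/-- `S` is a positive semidefinite zero forcing set. -/
def IsPSDZeroForcingSet (G : SimpleGraph V) (S : Set V) : Prop :=
  (⋃ n, (psdStep G)^[n] S) = Set.univ

/-- The failed positive semidefinite zero forcing number `F₊(G)`. -/
noncomputable def failedPSD (G : SimpleGraph V) : ℕ :=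
  sSup {n | ∃ S : Set V, ¬ IsPSDZeroForcingSet G S ∧ S.ncard = n}

/-- The positive semidefinite zero forcing number `Z₊(G)`. -/
noncomputable def psdZFNumber (G : SimpleGraph V) : ℕ :=
  sInf {n | ∃ S : Set V, IsPSDZeroForcingSet G S ∧ S.ncard = n}

lemma zf_univ (G : SimpleGraph V) : IsZeroForcingSet G Set.univ := by
  apply Set.eq_univ_of_univ_subset
  intro x _
  exact Set.mem_iUnion.2 ⟨0, by simp⟩

lemma zf_not_empty (G : SimpleGraph V) [Nonempty V] :
    ¬ IsZeroForcingSet G (∅ : Set V) := by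
  have hstep : zfStep G (∅ : Set V) = ∅ := by
    simp [zfStep]
  intro h
  have : (⋃ n, (zfStep G)^[n] (∅ : Set V)) = ∅ := by
    simp [Function.iterate_fixed hstep]
  rw [IsZeroForcingSet, this] at h
  exact (Set.empty_ne_univ h)

lemma zf_not_compl_isolated (G : SimpleGraph V) (v : V) (hv : ∀ w, ¬ G.Adj v w) :
    ¬ IsZeroForcingSet G (Set.univ \ {v}) := by
  set B : Set V := Set.univ \ {v}
  have hstep : zfStep G B = B := by
    apply subset_antisymm
    · rintro x (hx | hx)
      · exact hx
      · obtain ⟨hxB, u, huB, hadj, _⟩ := hx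
        have hxv : x = v := by
          by_contra h
          exact hxB ⟨trivial, h⟩
        subst hxv
        exact absurd hadj.symm (hv u)
    · exact Set.subset_union_left
  intro h
  have : (⋃ n, (zfStep G)^[n] B) = B := by
    simp only [Function.iterate_fixed hstep, Set.iUnion_const]
  rw [IsZeroForcingSet, this] at h
  have : v ∈ B := h ▸ trivial
  exact this.2 rfl

lemma zf_compl_of_neighbor (G : SimpleGraph V) (v u : V) (hadj : G.Adj u v) :
    IsZeroForcingSet G (Set.univ \ {v}) := by
  set B : Set V := Set.univ \ {v}
  have huB : u ∈ B := ⟨trivial, fun h => G.irrefl (h ▸ hadj)⟩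
  have hvB : v ∉ B := fun h => h.2 rfl
  have hstep : zfStep G B = Set.univ := by
    apply Set.eq_univ_of_forall
    intro x
    by_cases hx : x ∈ B
    · exact Or.inl hx
    · have hxv : x = v := by
        by_contra h
        exact hx ⟨trivial, h⟩
      subst hxv
      right
      refine ⟨hvB, u, huB, hadj, fun w _ hwB => ?_⟩
      by_contra h
      exact hwB ⟨trivial, h⟩
  apply Set.eq_univ_of_univ_subset
  intro x _
  exact Set.mem_iUnion.2 ⟨1, by simp [hstep]⟩

lemma zf_ncard_lt [Fintype V] (G : SimpleGraph V) {S : Set V}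
    (hS : ¬ IsZeroForcingSet G S) : S.ncard < Fintype.card V := by
  have hne : S ≠ Set.univ := fun h => hS (h ▸ zf_univ G)
  have : S.ncard < (Set.univ : Set V).ncard :=
    Set.ncard_lt_ncard (Set.ssubset_univ_iff.2 hne) (Set.toFinite _)
  simpa [Set.ncard_univ] using this

/-- For a graph `G` on `n` vertices, `F(G) = n − 1` iff `G` has an isolated
vertex. -/
theorem failedZF_eq_card_sub_one_iff [Fintype V] [Nonempty V] (G : SimpleGraph V) :
    failedZF G = Fintype.card V - 1 ↔ ∃ v : V, ∀ w : V, ¬ G.Adj v w := by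
  set T := {n | ∃ S : Set V, ¬ IsZeroForcingSet G S ∧ S.ncard = n}
  have hbdd : ∀ m ∈ T, m ≤ Fintype.card V - 1 := by
    rintro m ⟨S, hS, rfl⟩
    exact Nat.le_sub_one_of_lt (zf_ncard_lt G hS)
  have hne : 0 ∈ T := ⟨∅, zf_not_empty G, by simp⟩
  have hcardcompl : ∀ v : V, (Set.univ \ {v} : Set V).ncard = Fintype.card V - 1 := by
    intro v
    rw [Set.ncard_diff_singleton_of_mem (Set.mem_univ v), Set.ncard_univ,
      Nat.card_eq_fintype_card]
  constructor
  · intro h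
    have hmem : Fintype.card V - 1 ∈ T := by
      rw [← h]
      exact Nat.sSup_mem ⟨0, hne⟩ ⟨Fintype.card V - 1, hbdd⟩
    obtain ⟨S, hS, hcard⟩ := hmem
    have hne' : S ≠ Set.univ := fun h => hS (h ▸ zf_univ G)
    obtain ⟨v, hv⟩ : ∃ v, v ∉ S := by
      by_contra h
      push_neg at h
      exact hne' (Set.eq_univ_of_forall h)
    have hSeq : S = Set.univ \ {v} := by
      apply Set.eq_of_subset_of_ncard_le
      · intro x hx
        exact ⟨trivial, fun h => hv (h ▸ hx)⟩
      · rw [hcard, hcardcompl]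
      · exact Set.toFinite _
    refine ⟨v, fun w hw => ?_⟩
    exact hS (hSeq ▸ zf_compl_of_neighbor G v w hw.symm)
  · rintro ⟨v, hv⟩
    apply le_antisymm
    · exact csSup_le ⟨0, hne⟩ hbdd
    · exact le_csSup ⟨Fintype.card V - 1, hbdd⟩
        ⟨Set.univ \ {v}, zf_not_compl_isolated G v hv, hcardcompl v⟩
end

section
/- For the half-graph H_s with s ≥ 2, the failed zero forcing number is F(H_s) = 2s − 3; also F(H_1) = 0. -/
open SimpleGraph

variable {V : Type*}

/-- The half-graph `H_s`: bipartite on `v₁, …, v_s` and `v_{s+1}, …, v_{2s}`,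
where `vᵢ` (left) is adjacent to `v_{s+j}` (right) iff `i ≤ j`. -/
def halfGraph (s : ℕ) : SimpleGraph (Fin s ⊕ Fin s) where
  Adj a b := match a, b with
    | .inl i, .inr j => i.val ≤ j.val
    | .inr j, .inl i => i.val ≤ j.val
    | _, _ => False
  symm := ⟨by rintro (i | i) (j | j) h <;> exact h⟩
  loopless := ⟨by rintro (i | i) h <;> exact h⟩

/-!
Every vertex of `H_s` has a neighbour, so a set with at most one white vertex forces in one
step. With two white vertices, some blue vertex is adjacent to exactly one of them, and after
that forcing one white vertex remains; so every failed set of `H_s` (`s ≥ 2`) has at least three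
white vertices. Conversely, whitening `v_s`, `v_{2s-1}`, `v_{2s}` stalls the process: each blue
left vertex `v_i` (`i < s`) sees both `v_{2s-1}` and `v_{2s}`, and no blue right vertex sees
`v_s`. In `H_1 = K_2` only the empty set fails.
-/

open Sum

section ZeroForcing

variable (G : SimpleGraph V) {B : Set V}

lemma subset_zfStep (B : Set V) : B ⊆ zfStep G B :=
  Set.subset_union_left

lemma mem_zfStep {u v : V} (hu : u ∈ B) (huv : G.Adj u v) (hv : v ∉ B)
    (huniq : ∀ w, G.Adj u w → w ∉ B → w = v) : v ∈ zfStep G B :=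
  Or.inr ⟨hv, u, hu, huv, huniq⟩

lemma zfStep_eq_self (h : ∀ u ∈ B, ∀ v ∉ B, G.Adj u v → ∃ w ∉ B, w ≠ v ∧ G.Adj u w) :
    zfStep G B = B := by
  refine (Set.union_subset le_rfl ?_).antisymm (subset_zfStep G B)
  rintro v ⟨hv, u, hu, huv, huniq⟩
  obtain ⟨w, hw, hwv, huw⟩ := h u hu v hv huv
  exact absurd (huniq w huw hw) hwv

lemma isZeroForcingSet_univ : IsZeroForcingSet G Set.univ :=
  Set.eq_univ_of_univ_subset (Set.subset_iUnion (fun n => (zfStep G)^[n] Set.univ) 0)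

lemma IsZeroForcingSet.of_zfStep (h : IsZeroForcingSet G (zfStep G B)) :
    IsZeroForcingSet G B := by
  refine Set.eq_univ_of_univ_subset (h ▸ Set.iUnion_subset fun n => ?_)
  rw [← Function.iterate_succ_apply]
  exact Set.subset_iUnion (fun n => (zfStep G)^[n] B) (n + 1)

lemma not_isZeroForcingSet_of_zfStep_eq (hB : zfStep G B = B) (hne : B ≠ Set.univ) :
    ¬ IsZeroForcingSet G B := by
  intro h
  apply hne
  rw [← h]
  simp [Function.iterate_fixed hB, Set.iUnion_const]

lemma zfStep_eq_univ_of_subsingleton_compl (hG : ∀ v, ∃ u, G.Adj u v) (hB : Bᶜ.Subsingleton) :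
    zfStep G B = Set.univ := by
  refine Set.eq_univ_of_forall fun v => ?_
  by_cases hv : v ∈ B
  · exact subset_zfStep G B hv
  obtain ⟨u, huv⟩ := hG v
  have hu : u ∈ B := by_contra fun hu => huv.ne (hB hu hv)
  exact mem_zfStep G hu huv hv fun w _ hw => hB hw hv

lemma IsZeroForcingSet.of_subsingleton_compl (hG : ∀ v, ∃ u, G.Adj u v)
    (hB : Bᶜ.Subsingleton) : IsZeroForcingSet G B :=
  .of_zfStep G (zfStep_eq_univ_of_subsingleton_compl G hG hB ▸ isZeroForcingSet_univ G)

lemma mem_zfStep_of_compl_eq_pair {a b u : V} (hB : Bᶜ = {a, b}) (hua : G.Adj u a)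
    (hub : u ≠ b) (hnub : ¬ G.Adj u b) : a ∈ zfStep G B := by
  have hW : ∀ x, x ∉ B ↔ x = a ∨ x = b := fun x => by
    rw [← Set.mem_compl_iff, hB, Set.mem_insert_iff, Set.mem_singleton_iff]
  refine mem_zfStep G ?_ hua ((hW a).2 (.inl rfl)) fun w huw hw => ?_
  · exact not_not.1 fun hu => ((hW u).1 hu).elim hua.ne hub
  · exact ((hW w).1 hw).resolve_right fun hwb => hnub (hwb ▸ huw)

lemma IsZeroForcingSet.of_compl_eq_pair (hG : ∀ v, ∃ u, G.Adj u v) {a b : V}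
    (hB : Bᶜ = {a, b}) (ha : a ∈ zfStep G B) : IsZeroForcingSet G B := by
  refine .of_zfStep G (.of_subsingleton_compl G hG ?_)
  refine (Set.subsingleton_singleton (a := b)).anti fun x hx => ?_
  have hxab : x ∈ ({a, b} : Set V) := hB ▸ fun h => hx (subset_zfStep G B h)
  rcases hxab with rfl | rfl
  · exact absurd ha hx
  · rfl

lemma two_le_ncard_compl_of_not_isZeroForcingSet [Finite V] (hG : ∀ v, ∃ u, G.Adj u v)
    (hB : ¬ IsZeroForcingSet G B) : 2 ≤ Bᶜ.ncard := by
  by_contra! h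
  exact hB (.of_subsingleton_compl G hG (Set.ncard_le_one_iff_subsingleton.1 (by omega)))

lemma failedZF_eq_card_sub [Finite V] {k : ℕ}
    (hS : ∃ S, ¬ IsZeroForcingSet G S ∧ Sᶜ.ncard = k)
    (hle : ∀ S, ¬ IsZeroForcingSet G S → k ≤ Sᶜ.ncard) : failedZF G = Nat.card V - k := by
  refine IsGreatest.csSup_eq ⟨?_, ?_⟩
  · obtain ⟨S, hS, rfl⟩ := hS
    exact ⟨S, hS, by have := Set.ncard_add_ncard_compl S; omega⟩
  · rintro _ ⟨S, hS, rfl⟩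
    have := Set.ncard_add_ncard_compl S
    have := hle S hS
    omega

end ZeroForcing

section HalfGraph

variable {s : ℕ} {i j : Fin s}

@[simp] lemma halfGraph_adj_inl_inr : (halfGraph s).Adj (inl i) (inr j) ↔ i ≤ j := Iff.rfl

@[simp] lemma halfGraph_adj_inr_inl : (halfGraph s).Adj (inr j) (inl i) ↔ i ≤ j := Iff.rfl

@[simp] lemma not_halfGraph_adj_inl_inl : ¬ (halfGraph s).Adj (inl i) (inl j) := id

@[simp] lemma not_halfGraph_adj_inr_inr : ¬ (halfGraph s).Adj (inr i) (inr j) := id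

lemma halfGraph_exists_adj (v : Fin s ⊕ Fin s) : ∃ u, (halfGraph s).Adj u v := by
  rcases v with i | i
  · exact ⟨inr i, le_rfl⟩
  · exact ⟨inl i, le_rfl⟩

lemma halfGraph_mem_zfStep_of_compl_eq_inl_inr (hs : 2 ≤ s) {B : Set (Fin s ⊕ Fin s)}
    (hB : Bᶜ = {inl i, inr j}) :
    inl i ∈ zfStep (halfGraph s) B ∨ inr j ∈ zfStep (halfGraph s) B := by
  obtain ⟨k, hk⟩ : ∃ k : Fin s, (k ≠ i ∧ k ≤ j) ∨ (k ≠ j ∧ i ≤ k) := by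
    by_contra! h
    have h0 := h ⟨0, by omega⟩
    have h1 := h ⟨s - 1, by omega⟩
    simp only [ne_eq, Fin.ext_iff, Fin.lt_def] at h0 h1
    omega
  rcases hk with ⟨hki, hkj⟩ | ⟨hkj, hik⟩
  · right
    exact mem_zfStep_of_compl_eq_pair _ (Set.pair_comm _ _ ▸ hB) (u := inl k)
      (by simpa using hkj) (by simpa using hki) (by simp)
  · left
    exact mem_zfStep_of_compl_eq_pair _ hB (u := inr k) (by simpa using hik) (by simpa using hkj)
      (by simp)

lemma halfGraph_mem_zfStep_of_compl_eq_pair (hs : 2 ≤ s) {B : Set (Fin s ⊕ Fin s)}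
    {a b : Fin s ⊕ Fin s} (hab : a ≠ b) (hB : Bᶜ = {a, b}) :
    a ∈ zfStep (halfGraph s) B ∨ b ∈ zfStep (halfGraph s) B := by
  rcases a with i | i <;> rcases b with j | j
  · rcases lt_or_gt_of_ne (a := i) (b := j) (by simpa using hab) with h | h
    · exact .inl <| mem_zfStep_of_compl_eq_pair _ hB (u := inr i) (by simp) (by simp)
        (by simpa using h)
    · exact .inr <| mem_zfStep_of_compl_eq_pair _ (Set.pair_comm _ _ ▸ hB) (u := inr j)
        (by simp) (by simp) (by simpa using h)
  · exact halfGraph_mem_zfStep_of_compl_eq_inl_inr hs hB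
  · exact (halfGraph_mem_zfStep_of_compl_eq_inl_inr hs (Set.pair_comm _ _ ▸ hB)).symm
  · rcases lt_or_gt_of_ne (a := i) (b := j) (by simpa using hab) with h | h
    · exact .inr <| mem_zfStep_of_compl_eq_pair _ (Set.pair_comm _ _ ▸ hB) (u := inl j)
        (by simp) (by simp) (by simpa using h)
    · exact .inl <| mem_zfStep_of_compl_eq_pair _ hB (u := inl i) (by simp) (by simp)
        (by simpa using h)

lemma three_le_ncard_compl_of_not_isZeroForcingSet_halfGraph (hs : 2 ≤ s)
    {B : Set (Fin s ⊕ Fin s)} (hB : ¬ IsZeroForcingSet (halfGraph s) B) : 3 ≤ Bᶜ.ncard := by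
  have h2 := two_le_ncard_compl_of_not_isZeroForcingSet _ halfGraph_exists_adj hB
  by_contra! h3
  obtain ⟨a, b, hab, hBab⟩ := Set.ncard_eq_two.1 (by omega : Bᶜ.ncard = 2)
  rcases halfGraph_mem_zfStep_of_compl_eq_pair hs hab hBab with ha | hb
  · exact hB (.of_compl_eq_pair _ halfGraph_exists_adj hBab ha)
  · exact hB (.of_compl_eq_pair _ halfGraph_exists_adj (Set.pair_comm a b ▸ hBab) hb)

lemma halfGraph_zfStep_compl_eq {j k : Fin s} (hjk : j.val + 1 = k.val) (hk : k.val + 1 = s) :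
    zfStep (halfGraph s) {inl k, inr j, inr k}ᶜ = {inl k, inr j, inr k}ᶜ := by
  refine zfStep_eq_self _ fun u hu v hv huv => ?_
  rw [Set.mem_compl_iff, not_not] at hv
  simp only [Set.mem_compl_iff, Set.mem_insert_iff, Set.mem_singleton_iff, not_or] at hu hv
  rcases u with l | l
  · have hl : l.val ≤ j.val := by
      have := l.isLt
      have := hu.1
      simp only [inl.injEq, Fin.ext_iff] at this
      omega
    rcases hv with rfl | rfl | rfl
    · exact absurd huv not_halfGraph_adj_inl_inl
    · refine ⟨inr k, by simp, ?_, ?_⟩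
      · simp only [ne_eq, inr.injEq, Fin.ext_iff]; omega
      · simp only [halfGraph_adj_inl_inr, Fin.le_def]; omega
    · refine ⟨inr j, by simp, ?_, ?_⟩
      · simp only [ne_eq, inr.injEq, Fin.ext_iff]; omega
      · simpa only [halfGraph_adj_inl_inr, Fin.le_def] using hl
  · rcases hv with rfl | rfl | rfl
    · have := l.isLt
      have := hu.2.2
      simp only [inr.injEq, Fin.ext_iff] at this
      simp only [halfGraph_adj_inr_inl, Fin.le_def] at huv
      omega
    · exact absurd huv not_halfGraph_adj_inr_inr
    · exact absurd huv not_halfGraph_adj_inr_inr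

end HalfGraph

/-- `F(H₁) = 0` and `F(H_s) = 2s − 3` for `s ≥ 2`. -/
theorem failedZF_halfGraph :
    failedZF (halfGraph 1) = 0 ∧ ∀ s : ℕ, 2 ≤ s → failedZF (halfGraph s) = 2 * s - 3 := by
  have hcard (s : ℕ) : Nat.card (Fin s ⊕ Fin s) = 2 * s := by simp [two_mul]
  constructor
  · have hempty : ¬ IsZeroForcingSet (halfGraph 1) ∅ :=
      not_isZeroForcingSet_of_zfStep_eq _ (by simp [zfStep]) Set.empty_ne_univ
    rw [failedZF_eq_card_sub _ ⟨∅, hempty, by simp⟩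
      fun S => two_le_ncard_compl_of_not_isZeroForcingSet _ halfGraph_exists_adj, hcard]
  · intro s hs
    let j : Fin s := ⟨s - 2, by omega⟩
    let k : Fin s := ⟨s - 1, by omega⟩
    have hW : ({inl k, inr j, inr k} : Set (Fin s ⊕ Fin s)).ncard = 3 := by
      rw [Set.ncard_eq_three]
      exact ⟨_, _, _, by simp, by simp, by simp [j, k, Fin.ext_iff]; omega, rfl⟩
    have hstall : ¬ IsZeroForcingSet (halfGraph s) {inl k, inr j, inr k}ᶜ :=
      not_isZeroForcingSet_of_zfStep_eq _
        (halfGraph_zfStep_compl_eq (by simp [j, k]; omega) (by simp [k]; omega))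
        (Set.compl_ne_univ.2 (Set.insert_nonempty _ _))
    rw [failedZF_eq_card_sub _ ⟨_, hstall, by rw [compl_compl, hW]⟩
      fun S => three_le_ncard_compl_of_not_isZeroForcingSet_halfGraph hs, hcard]
end
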